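/- Suppose (C1)–(C2) hold and p_1,…,p_d : [0,∞) → [0,∞) are continuous with ∫₀^∞ t^{1-N} ∫₀^t s^{N-1} p_j(s) ds dt = ∞ for every j = 1,…,d. Let (u_1,…,u_d) be nonnegative nondecreasing functions on [0,∞), not all identically zero, satisfying u_i(r) = u_i(0) + ∫₀^r t^{1-N} ∫₀^t s^{N-1} p_i(s) f_i(u_1(s),…,u_d(s)) ds dt for all r ≥ 0 and i = 1,…,d. Then u_i(r) → ∞ as r → ∞ for every i = 1,…,d. -/

import Mathlib

/-!
If `uᵢ` stayed bounded, the integral equation would make the flux of `pᵢ fᵢ(u)` integrable on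
`(0, ∞)`. Some `u_{i₀}` is positive from some `r₁` on, so by monotonicity
`fᵢ(u(s)) ≥ fᵢ(u(r₁)) > 0` for `s ≥ r₁`: the flux of `pᵢ` is then dominated by that of
`pᵢ fᵢ(u)` plus `C t^{1-N}`, which is integrable at infinity because `N ≥ 3`. This contradicts
the divergence assumption on `pᵢ`.
-/

open MeasureTheory Set Filter intervalIntegral

/-- For a radial function `u` on `ℝⁿ⁺¹` with `Δu = φ` and `u'(0) = 0`, `u'(t) = radialFlux n φ t`. -/
noncomputable def radialFlux (n : ℕ) (φ : ℝ → ℝ) (t : ℝ) : ℝ :=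
  (∫ s in (0:ℝ)..t, s ^ n * φ s) / t ^ n

lemma tendsto_atTop_of_monotoneOn_Ici {u : ℝ → ℝ} {a : ℝ} (hu : MonotoneOn u (Ici a))
    (h : ∀ M, ∃ r ≥ a, M ≤ u r) : Tendsto u atTop atTop :=
  tendsto_atTop.2 fun M =>
    let ⟨r, hr, hM⟩ := h M
    (eventually_ge_atTop r).mono fun _ hx => hM.trans (hu hr (hr.trans hx) hx)

namespace radialFlux

variable {n : ℕ} {φ ψ : ℝ → ℝ} {a b c m r t : ℝ}

lemma intervalIntegrable_pow_mul (hφ : IntegrableOn φ (Icc 0 c)) (ha : 0 ≤ a) (hab : a ≤ b)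
    (hbc : b ≤ c) : IntervalIntegrable (fun s => s ^ n * φ s) volume a b :=
  (intervalIntegrable_iff_integrableOn_Icc_of_le hab).2
    ((hφ.continuousOn_mul (continuous_pow n).continuousOn isCompact_Icc).mono_set
      (Icc_subset_Icc ha hbc))

lemma nonneg (hφ : ∀ s ≥ 0, 0 ≤ φ s) (ht : 0 ≤ t) : 0 ≤ radialFlux n φ t :=
  div_nonneg (integral_nonneg ht fun s hs => mul_nonneg (pow_nonneg hs.1 n) (hφ s hs.1))
    (pow_nonneg ht n)

lemma abs_le (hφ : IntegrableOn φ (Icc 0 b)) (ht : 0 < t) (htb : t ≤ b) :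
    |radialFlux n φ t| ≤ ∫ s in (0:ℝ)..b, |φ s| := by
  have habs : IntervalIntegrable (fun s => |φ s|) volume 0 b :=
    ((intervalIntegrable_iff_integrableOn_Icc_of_le (ht.le.trans htb)).2 hφ).abs
  have hsub : uIcc 0 t ⊆ uIcc 0 b := by
    rw [uIcc_of_le ht.le, uIcc_of_le (ht.le.trans htb)]
    exact Icc_subset_Icc_right htb
  have htn : 0 < t ^ n := pow_pos ht n
  rw [radialFlux, abs_div, abs_of_pos htn, div_le_iff₀ htn]
  calc |∫ s in (0:ℝ)..t, s ^ n * φ s|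
      ≤ ∫ s in (0:ℝ)..t, |s ^ n * φ s| := abs_integral_le_integral_abs ht.le
    _ ≤ ∫ s in (0:ℝ)..t, t ^ n * |φ s| := by
        refine integral_mono_on ht.le (intervalIntegrable_pow_mul hφ le_rfl ht.le htb).abs
          ((habs.mono_set hsub).const_mul _) fun s hs => ?_
        rw [abs_mul, abs_of_nonneg (pow_nonneg hs.1 n)]
        gcongr
        exacts [hs.1, hs.2]
    _ = t ^ n * ∫ s in (0:ℝ)..t, |φ s| := integral_const_mul _ _
    _ ≤ t ^ n * ∫ s in (0:ℝ)..b, |φ s| := by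
        gcongr
        exact integral_mono_interval le_rfl ht.le htb (Eventually.of_forall fun _ => abs_nonneg _)
          habs
    _ = (∫ s in (0:ℝ)..b, |φ s|) * t ^ n := mul_comm _ _

lemma continuousOn_Ioc (hφ : IntegrableOn φ (Icc 0 b)) :
    ContinuousOn (radialFlux n φ) (Ioc 0 b) := by
  rcases le_or_gt 0 b with hb | hb
  · have hprim := continuousOn_primitive_interval'
      (intervalIntegrable_pow_mul (n := n) hφ le_rfl hb le_rfl) left_mem_uIcc
    refine (hprim.mono fun t ht => ?_).div (continuous_pow n).continuousOn
      fun t ht => pow_ne_zero n ht.1.ne'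
    rw [uIcc_of_le hb]
    exact Ioc_subset_Icc_self ht
  · simp [Ioc_eq_empty_of_le hb.le]

lemma continuousOn_Ioi (hφ : ∀ b, IntegrableOn φ (Icc 0 b)) :
    ContinuousOn (radialFlux n φ) (Ioi 0) := fun t ht =>
  ((continuousOn_Ioc (hφ (t + 1))).continuousAt
    (Ioc_mem_nhds ht (lt_add_one t))).continuousWithinAt

lemma integrableOn_Ioc (hφ : IntegrableOn φ (Icc 0 b)) :
    IntegrableOn (radialFlux n φ) (Ioc 0 b) :=
  (integrableOn_const (C := ∫ s in (0:ℝ)..b, |φ s|) measure_Ioc_lt_top.ne).mono'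
    ((continuousOn_Ioc hφ).aestronglyMeasurable measurableSet_Ioc)
    ((ae_restrict_iff' measurableSet_Ioc).2 <| Eventually.of_forall fun _ ht =>
      abs_le hφ ht.1 ht.2)

lemma integrableOn_Ioi_of_integral_le (hφ : ∀ b, IntegrableOn φ (Icc 0 b))
    (hφ0 : ∀ s ≥ 0, 0 ≤ φ s) {M : ℝ} (hM : ∀ r ≥ 0, ∫ t in (0:ℝ)..r, radialFlux n φ t ≤ M) :
    IntegrableOn (radialFlux n φ) (Ioi 0) := by
  refine integrableOn_Ioi_of_intervalIntegral_norm_bounded M 0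
    (fun k : ℕ => integrableOn_Ioc (hφ k)) tendsto_natCast_atTop_atTop
    (Eventually.of_forall fun k => ?_)
  rw [integral_congr fun t ht => Real.norm_of_nonneg (nonneg hφ0 (by
    rw [uIcc_of_le k.cast_nonneg] at ht; exact ht.1))]
  exact hM k k.cast_nonneg

lemma mul_integral_pow_mul_le (hψ : IntegrableOn ψ (Icc 0 t)) (hφ : IntegrableOn φ (Icc 0 t))
    (hφ0 : ∀ s ≥ 0, 0 ≤ φ s) (hr : 0 ≤ r) (hrt : r ≤ t) (hle : ∀ s ≥ r, m * ψ s ≤ φ s) :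
    m * ∫ s in (0:ℝ)..t, s ^ n * ψ s ≤
      (∫ s in (0:ℝ)..t, s ^ n * φ s) + m * ∫ s in (0:ℝ)..r, s ^ n * ψ s := by
  have hψ_tail := intervalIntegrable_pow_mul (n := n) hψ hr hrt le_rfl
  have hφ_tail := intervalIntegrable_pow_mul (n := n) hφ hr hrt le_rfl
  rw [← integral_add_adjacent_intervals (intervalIntegrable_pow_mul hψ le_rfl hr hrt) hψ_tail,
    ← integral_add_adjacent_intervals (intervalIntegrable_pow_mul hφ le_rfl hr hrt) hφ_tail,
    mul_add, ← integral_const_mul m (fun s => s ^ n * ψ s) (a := r)]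
  have htail : ∫ s in r..t, m * (s ^ n * ψ s) ≤ ∫ s in r..t, s ^ n * φ s :=
    integral_mono_on hrt (hψ_tail.const_mul m) hφ_tail fun s hs => by
      rw [mul_left_comm]
      exact mul_le_mul_of_nonneg_left (hle s hs.1) (pow_nonneg (hr.trans hs.1) n)
  have hhead : 0 ≤ ∫ s in (0:ℝ)..r, s ^ n * φ s :=
    integral_nonneg hr fun s hs => mul_nonneg (pow_nonneg hs.1 n) (hφ0 s hs.1)
  linarith

lemma integrableOn_Ioi_of_eventually_le (hn : 1 < n) (hm : 0 < m)
    (hψ : ∀ b, IntegrableOn ψ (Icc 0 b)) (hψ0 : ∀ s ≥ 0, 0 ≤ ψ s)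
    (hφ : ∀ b, IntegrableOn φ (Icc 0 b)) (hφ0 : ∀ s ≥ 0, 0 ≤ φ s)
    (hle : ∀ᶠ s in atTop, m * ψ s ≤ φ s) (hφ_int : IntegrableOn (radialFlux n φ) (Ioi 0)) :
    IntegrableOn (radialFlux n ψ) (Ioi 0) := by
  obtain ⟨r₁, hr₁⟩ := eventually_atTop.1 hle
  set r := max r₁ 1
  have hr : 0 < r := lt_max_of_lt_right one_pos
  set C := ∫ s in (0:ℝ)..r, s ^ n * ψ s
  have hbound : ∀ t > r, radialFlux n ψ t ≤ radialFlux n φ t / m + C * t ^ (-(n : ℝ)) := by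
    intro t ht
    have ht0 : 0 < t := hr.trans ht
    have key := mul_integral_pow_mul_le (n := n) (hψ t) (hφ t) hφ0 hr.le ht.le
      fun s hs => hr₁ s ((le_max_left _ _).trans hs)
    have hrhs : radialFlux n φ t / m + C * t ^ (-(n : ℝ)) =
        ((∫ s in (0:ℝ)..t, s ^ n * φ s) + m * C) / m / t ^ n := by
      rw [Real.rpow_neg ht0.le, Real.rpow_natCast, radialFlux]
      field_simp
    rw [hrhs, radialFlux]
    gcongr
    rw [le_div_iff₀' hm]
    exact key
  rw [← Ioc_union_Ioi_eq_Ioi hr.le]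
  refine (integrableOn_Ioc (hψ r)).union <|
    Integrable.mono' (((hφ_int.mono_set (Ioi_subset_Ioi hr.le)).div_const m).add
      ((integrableOn_Ioi_rpow_of_lt (a := -(n : ℝ)) (by linarith [(Nat.one_lt_cast.2 hn : (1:ℝ) < n)]) hr).const_mul C))
      (((continuousOn_Ioi hψ).mono (Ioi_subset_Ioi hr.le)).aestronglyMeasurable
        measurableSet_Ioi) ?_
  refine (ae_restrict_iff' measurableSet_Ioi).2 (Eventually.of_forall fun t ht => ?_)
  rw [Real.norm_of_nonneg (nonneg hψ0 (hr.trans ht).le)]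
  exact hbound t ht

end radialFlux

theorem stmt15_general
    (N d : ℕ) (hN : 3 ≤ N)
    (f : Fin d → (Fin d → ℝ) → ℝ)
    -- (C1)
    (hf_nonneg : ∀ j v, (∀ i, 0 ≤ v i) → 0 ≤ f j v)
    (hfpos : ∀ j v, (∀ i, 0 ≤ v i) → (∃ i, 0 < v i) → 0 < f j v)
    -- (C2)
    (hC2 : ∀ j v w, (∀ i, 0 ≤ v i) → (∀ i, v i ≤ w i) → f j v ≤ f j w)
    -- continuous nonnegative p₁,…,p_d with ∫₀^∞ t^{1-N} ∫₀^t s^{N-1} pⱼ(s) ds dt = ∞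
    (p : Fin d → ℝ → ℝ)
    (hp_cont : ∀ i, ContinuousOn (p i) (Ici 0))
    (hp_nonneg : ∀ i, ∀ t ≥ (0:ℝ), 0 ≤ p i t)
    (hdiv : ∀ j, ¬ IntegrableOn
      (fun t : ℝ => (∫ s in (0:ℝ)..t, s ^ (N - 1) * p j s) / t ^ (N - 1)) (Ioi 0))
    -- (u₁,…,u_d) nonnegative nondecreasing, not all identically zero
    (u : Fin d → ℝ → ℝ)
    (hu_nonneg : ∀ i, ∀ r ≥ (0:ℝ), 0 ≤ u i r)
    (hu_mono : ∀ i, MonotoneOn (u i) (Ici 0))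
    (hu_nontriv : ∃ i, ∃ r ≥ (0:ℝ), u i r ≠ 0)
    -- the integral equation
    (hu_eq : ∀ i, ∀ r ≥ (0:ℝ),
      u i r = u i 0 +
        ∫ t in (0:ℝ)..r,
          (∫ s in (0:ℝ)..t, s ^ (N - 1) * (p i s * f i (fun j => u j s))) / t ^ (N - 1)) :
    -- conclusion: every uᵢ(r) → ∞ as r → ∞
    ∀ i, Tendsto (fun r => u i r) atTop atTop := by
  intro i
  obtain ⟨i₀, r₁, hr₁, hne⟩ := hu_nontriv
  set g : ℝ → ℝ := fun s => f i fun j => u j s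
  have hg_mono : MonotoneOn g (Ici 0) := fun a ha b hb hab =>
    hC2 i _ _ (fun j => hu_nonneg j a ha) fun j => hu_mono j ha hb hab
  have hg_pos : 0 < g r₁ :=
    hfpos i _ (fun j => hu_nonneg j r₁ hr₁) ⟨i₀, (hu_nonneg i₀ r₁ hr₁).lt_of_ne' hne⟩
  have hp_int : ∀ b, IntegrableOn (p i) (Icc 0 b) := fun b =>
    ((hp_cont i).mono Icc_subset_Ici_self).integrableOn_compact isCompact_Icc
  have hpg_int : ∀ b, IntegrableOn (fun s => p i s * g s) (Icc 0 b) := fun b =>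
    ((hg_mono.mono Icc_subset_Ici_self).integrableOn_isCompact isCompact_Icc).continuousOn_mul
      ((hp_cont i).mono Icc_subset_Ici_self) isCompact_Icc
  have hpg_nonneg : ∀ s ≥ 0, 0 ≤ p i s * g s := fun s hs =>
    mul_nonneg (hp_nonneg i s hs) (hf_nonneg i _ fun j => hu_nonneg j s hs)
  refine tendsto_atTop_of_monotoneOn_Ici (hu_mono i) fun M => ?_
  by_contra! hM
  have hflux_le : ∀ r ≥ 0, ∫ t in (0:ℝ)..r, radialFlux (N - 1) (fun s => p i s * g s) t ≤ M :=
    fun r hr => by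
      have h_eq : u i r = u i 0 + ∫ t in (0:ℝ)..r, radialFlux (N - 1) (fun s => p i s * g s) t :=
        hu_eq i r hr
      linarith [hu_nonneg i 0 le_rfl, hM r hr]
  have hp_le : ∀ᶠ s in atTop, g r₁ * p i s ≤ p i s * g s := by
    filter_upwards [eventually_ge_atTop r₁] with s hs
    rw [mul_comm]
    exact mul_le_mul_of_nonneg_left (hg_mono hr₁ (hr₁.trans hs) hs) (hp_nonneg i s (hr₁.trans hs))
  exact hdiv i <| radialFlux.integrableOn_Ioi_of_eventually_le (by omega) hg_pos hp_int
    (hp_nonneg i) hpg_int hpg_nonneg hp_le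
    (radialFlux.integrableOn_Ioi_of_integral_le hpg_int hpg_nonneg hflux_le)

theorem stmt15
    (N d : ℕ) (hN : 3 ≤ N) (hd : 1 ≤ d)
    (f : Fin d → (Fin d → ℝ) → ℝ)
    -- (C1)
    (hf_nonneg : ∀ j v, (∀ i, 0 ≤ v i) → 0 ≤ f j v)
    (hC1 : ∀ j, ContDiffOn ℝ 1 (f j) {v : Fin d → ℝ | ∀ i, 0 ≤ v i})
    (hf0 : ∀ j, f j (fun _ => 0) = 0)
    (hfpos : ∀ j v, (∀ i, 0 ≤ v i) → (∃ i, 0 < v i) → 0 < f j v)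
    -- (C2)
    (hC2 : ∀ j v w, (∀ i, 0 ≤ v i) → (∀ i, v i ≤ w i) → f j v ≤ f j w)
    -- continuous nonnegative p₁,…,p_d with ∫₀^∞ t^{1-N} ∫₀^t s^{N-1} pⱼ(s) ds dt = ∞
    (p : Fin d → ℝ → ℝ)
    (hp_cont : ∀ i, ContinuousOn (p i) (Ici 0))
    (hp_nonneg : ∀ i, ∀ t ≥ (0:ℝ), 0 ≤ p i t)
    (hdiv : ∀ j, ¬ IntegrableOn
      (fun t : ℝ => (∫ s in (0:ℝ)..t, s ^ (N - 1) * p j s) / t ^ (N - 1)) (Ioi 0))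
    -- (u₁,…,u_d) nonnegative nondecreasing, not all identically zero
    (u : Fin d → ℝ → ℝ)
    (hu_nonneg : ∀ i, ∀ r ≥ (0:ℝ), 0 ≤ u i r)
    (hu_mono : ∀ i, MonotoneOn (u i) (Ici 0))
    (hu_nontriv : ∃ i, ∃ r ≥ (0:ℝ), u i r ≠ 0)
    -- the integral equation
    (hu_eq : ∀ i, ∀ r ≥ (0:ℝ),
      u i r = u i 0 +
        ∫ t in (0:ℝ)..r,
          (∫ s in (0:ℝ)..t, s ^ (N - 1) * (p i s * f i (fun j => u j s))) / t ^ (N - 1)) :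
    -- conclusion: every uᵢ(r) → ∞ as r → ∞
    ∀ i, Tendsto (fun r => u i r) atTop atTop :=
  stmt15_general N d hN f hf_nonneg hfpos hC2 p hp_cont hp_nonneg hdiv u hu_nonneg hu_mono
    hu_nontriv hu_eq
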